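/- A bilinear form Ω on the Lie superalgebra (C⁵₀+A) is even, supersymmetric and ad-invariant if and only if there exist β, k ∈ ℝ such that Ω(T₁,T₁) = β, Ω(T₁,T₂) = Ω(T₂,T₁) = k, Ω(T₃,T₄) = k, Ω(T₄,T₃) = −k, and all other values of Ω on basis vectors are zero. Moreover, such a form is non-degenerate if and only if k ≠ 0. -/
import Mathlib


noncomputable section

/-- The underlying supervector space `V = ℝ⁴`, with basis `T 0, T 1` even and `T 2, T 3` odd
(corresponding to `T₁, T₂; T₃, T₄`). -/
abbrev V4 : Type := Fin 4 → ℝ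

/-- The basis vectors `T₁, T₂, T₃, T₄` (zero-indexed). -/
def T (i : Fin 4) : V4 := Pi.single i 1

/-- The even subspace `span{T₁,T₂}`. -/
def spanEven : Submodule ℝ V4 := Submodule.span ℝ {T 0, T 1}

/-- The odd subspace `span{T₃,T₄}`. -/
def spanOdd : Submodule ℝ V4 := Submodule.span ℝ {T 2, T 3}

/-- The bracket of the Lie superalgebra `(C⁵₀+A)`: `[T₁,T₃] = −T₄`, `[T₃,T₁] = T₄`, `[T₁,T₄] = T₃`, `[T₄,T₁] = −T₃`, `[T₃,T₃] = T₂`, `[T₄,T₄] = T₂`, all other brackets of basis vectors zero. -/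
def br (x y : V4) : V4 := ![0, x 2 * y 2 + x 3 * y 3, x 0 * y 3 - x 3 * y 0, -(x 0 * y 2) + x 2 * y 0]

/-- A bilinear form is even: it vanishes whenever exactly one argument lies in the even
subspace and the other in the odd subspace. -/
def IsEvenForm (Ω : V4 →ₗ[ℝ] V4 →ₗ[ℝ] ℝ) : Prop :=
  (∀ x ∈ spanEven, ∀ y ∈ spanOdd, Ω x y = 0) ∧
  (∀ x ∈ spanOdd, ∀ y ∈ spanEven, Ω x y = 0)

/-- A bilinear form is supersymmetric: symmetric on the even subspace and antisymmetric on
the odd subspace. -/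
def IsSuperSym (Ω : V4 →ₗ[ℝ] V4 →ₗ[ℝ] ℝ) : Prop :=
  (∀ x ∈ spanEven, ∀ y ∈ spanEven, Ω x y = Ω y x) ∧
  (∀ x ∈ spanOdd, ∀ y ∈ spanOdd, Ω x y = -Ω y x)

/-- Ad-invariance of a bilinear form with respect to the bracket of `(C⁵₀+A)`:
`Ω([x,y],z) = Ω(x,[y,z])` for all `x, y, z`. -/
def IsAdInv (Ω : V4 →ₗ[ℝ] V4 →ₗ[ℝ] ℝ) : Prop :=
  ∀ x y z : V4, Ω (br x y) z = Ω x (br y z)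

/-- The matrix of values of the claimed general ad-invariant supersymmetric form:
`Ω(T₁,T₁) = β`, `Ω(T₁,T₂) = Ω(T₂,T₁) = k`, `Ω(T₃,T₄) = k`, `Ω(T₄,T₃) = −k`, all other
values on basis vectors zero. -/
def OmegaMat (β k : ℝ) : Matrix (Fin 4) (Fin 4) ℝ :=
  !![β, k, 0, 0; k, 0, 0, 0; 0, 0, 0, k; 0, 0, -k, 0]

lemma eq_sum_T (x : V4) : x = ∑ i, x i • T i := by
  ext j
  simp [T, Finset.sum_apply, Pi.single_apply]

lemma Omega_expand (Ω : V4 →ₗ[ℝ] V4 →ₗ[ℝ] ℝ) (x y : V4) :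
    Ω x y = ∑ i : Fin 4, ∑ j : Fin 4, x i * y j * Ω (T i) (T j) := by
  conv_lhs => rw [eq_sum_T x, eq_sum_T y]
  simp only [map_sum, LinearMap.sum_apply, map_smul, LinearMap.smul_apply, smul_eq_mul,
    Finset.mul_sum]
  rw [Finset.sum_comm]
  refine Finset.sum_congr rfl fun i _ => Finset.sum_congr rfl fun j _ => by ring

lemma key_lemma (Ω : V4 →ₗ[ℝ] V4 →ₗ[ℝ] ℝ) (β k : ℝ)
    (hv : ∀ a b : Fin 4, Ω (T a) (T b) = OmegaMat β k a b) (x y : V4) :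
    Ω x y = x 0 * y 0 * β + x 0 * y 1 * k + x 1 * y 0 * k + x 2 * y 3 * k - x 3 * y 2 * k := by
  rw [Omega_expand Ω x y]
  simp [Fin.sum_univ_four, hv, OmegaMat, Matrix.vecHead, Matrix.vecTail]
  ring

lemma mem_spanEven {x : V4} (hx : x ∈ spanEven) : x 2 = 0 ∧ x 3 = 0 := by
  have h : spanEven ≤ LinearMap.ker ((LinearMap.proj 2 : V4 →ₗ[ℝ] ℝ)) ⊓
      LinearMap.ker ((LinearMap.proj 3 : V4 →ₗ[ℝ] ℝ)) := by
    rw [spanEven, Submodule.span_le]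
    rintro v (rfl | rfl) <;>
      simp [Submodule.mem_inf, LinearMap.mem_ker, T, Pi.single_apply]
  have := h hx
  simpa [Submodule.mem_inf, LinearMap.mem_ker] using this

lemma mem_spanOdd {x : V4} (hx : x ∈ spanOdd) : x 0 = 0 ∧ x 1 = 0 := by
  have h : spanOdd ≤ LinearMap.ker ((LinearMap.proj 0 : V4 →ₗ[ℝ] ℝ)) ⊓
      LinearMap.ker ((LinearMap.proj 1 : V4 →ₗ[ℝ] ℝ)) := by
    rw [spanOdd, Submodule.span_le]
    rintro v (rfl | rfl) <;>
      simp [Submodule.mem_inf, LinearMap.mem_ker, T, Pi.single_apply]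
  have := h hx
  simpa [Submodule.mem_inf, LinearMap.mem_ker] using this

lemma T0_mem : T 0 ∈ spanEven := Submodule.subset_span (Or.inl rfl)
lemma T1_mem : T 1 ∈ spanEven := Submodule.subset_span (Or.inr rfl)
lemma T2_mem : T 2 ∈ spanOdd := Submodule.subset_span (Or.inl rfl)
lemma T3_mem : T 3 ∈ spanOdd := Submodule.subset_span (Or.inr rfl)

lemma br22 : br (T 2) (T 2) = T 1 := by
  funext j; fin_cases j <;> simp [br, T, Pi.single_apply]
lemma br21 : br (T 2) (T 1) = 0 := by
  funext j; fin_cases j <;> simp [br, T, Pi.single_apply]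
lemma br03 : br (T 0) (T 3) = T 2 := by
  funext j; fin_cases j <;> simp [br, T, Pi.single_apply]
lemma br33 : br (T 3) (T 3) = T 1 := by
  funext j; fin_cases j <;> simp [br, T, Pi.single_apply]

/-- A bilinear form `Ω` on the Lie superalgebra `(C⁵₀+A)` is even, supersymmetric and ad-invariant
if and only if there exist `β, k ∈ ℝ` with `Ω(T₁,T₁) = β`, `Ω(T₁,T₂) = Ω(T₂,T₁) = k`,
`Ω(T₃,T₄) = k`, `Ω(T₄,T₃) = −k`, and all other values on basis vectors zero. Moreover, such
a form is non-degenerate if and only if `k ≠ 0`. -/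
theorem adInvariant_metric_C50A (Ω : V4 →ₗ[ℝ] V4 →ₗ[ℝ] ℝ) :
    ((IsEvenForm Ω ∧ IsSuperSym Ω ∧ IsAdInv Ω) ↔
      ∃ β k : ℝ, ∀ a b : Fin 4, Ω (T a) (T b) = OmegaMat β k a b) ∧
    (∀ β k : ℝ, (∀ a b : Fin 4, Ω (T a) (T b) = OmegaMat β k a b) →
      ((∀ x : V4, (∀ y : V4, Ω x y = 0) → x = 0) ↔ k ≠ 0)) := by
  constructor
  · constructor
    · rintro ⟨⟨he1, he2⟩, ⟨hs1, hs2⟩, ha⟩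
      refine ⟨Ω (T 0) (T 0), Ω (T 0) (T 1), ?_⟩
      have h10 : Ω (T 1) (T 0) = Ω (T 0) (T 1) := hs1 _ T1_mem _ T0_mem
      have h11 : Ω (T 1) (T 1) = 0 := by
        have := ha (T 2) (T 2) (T 1)
        rwa [br22, br21, map_zero] at this
      have h02 : Ω (T 0) (T 2) = 0 := he1 _ T0_mem _ T2_mem
      have h03 : Ω (T 0) (T 3) = 0 := he1 _ T0_mem _ T3_mem
      have h12 : Ω (T 1) (T 2) = 0 := he1 _ T1_mem _ T2_mem
      have h13 : Ω (T 1) (T 3) = 0 := he1 _ T1_mem _ T3_mem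
      have h20 : Ω (T 2) (T 0) = 0 := he2 _ T2_mem _ T0_mem
      have h21 : Ω (T 2) (T 1) = 0 := he2 _ T2_mem _ T1_mem
      have h30 : Ω (T 3) (T 0) = 0 := he2 _ T3_mem _ T0_mem
      have h31 : Ω (T 3) (T 1) = 0 := he2 _ T3_mem _ T1_mem
      have h22 : Ω (T 2) (T 2) = 0 := by
        have := hs2 _ T2_mem _ T2_mem; linarith
      have h33 : Ω (T 3) (T 3) = 0 := by
        have := hs2 _ T3_mem _ T3_mem; linarith
      have h23 : Ω (T 2) (T 3) = Ω (T 0) (T 1) := by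
        have := ha (T 0) (T 3) (T 3)
        rwa [br03, br33] at this
      have h32 : Ω (T 3) (T 2) = -Ω (T 0) (T 1) := by
        have := hs2 _ T3_mem _ T2_mem; rw [this, h23]
      intro a b
      fin_cases a <;> fin_cases b <;>
        simp [OmegaMat, h10, h11, h02, h03, h12, h13, h20, h21, h30, h31, h22, h33, h23, h32, Matrix.vecHead, Matrix.vecTail]
    · rintro ⟨β, k, hv⟩
      have key := key_lemma Ω β k hv
      refine ⟨⟨?_, ?_⟩, ⟨?_, ?_⟩, ?_⟩
      · intro x hx y hy
        obtain ⟨h2, h3⟩ := mem_spanEven hx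
        obtain ⟨h0, h1⟩ := mem_spanOdd hy
        rw [key, h2, h3, h0, h1]; ring
      · intro x hx y hy
        obtain ⟨h0, h1⟩ := mem_spanOdd hx
        obtain ⟨h2, h3⟩ := mem_spanEven hy
        rw [key, h0, h1, h2, h3]; ring
      · intro x hx y hy
        obtain ⟨hx2, hx3⟩ := mem_spanEven hx
        obtain ⟨hy2, hy3⟩ := mem_spanEven hy
        rw [key, key, hx2, hx3, hy2, hy3]; ring
      · intro x hx y hy
        obtain ⟨hx0, hx1⟩ := mem_spanOdd hx
        obtain ⟨hy0, hy1⟩ := mem_spanOdd hy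
        rw [key, key, hx0, hx1, hy0, hy1]; ring
      · intro x y z
        rw [key, key]
        simp only [br, Matrix.cons_val_zero, Matrix.cons_val_one, Matrix.head_cons,
          Matrix.cons_val_two, Matrix.tail_cons, Matrix.cons_val_three]
        ring
  · intro β k hv
    have key := key_lemma Ω β k hv
    constructor
    · intro hnd hk
      subst hk
      have h : T 1 = 0 := by
        apply hnd
        intro y
        rw [key]
        simp [T, Pi.single_apply]
      have := congrFun h 1
      simp [T] at this
    · intro hk x hx
      have e1 : x 0 * k = 0 := by
        have := hx (T 1); rw [key] at this
        simpa [T, Pi.single_apply] using this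
      have hx0 : x 0 = 0 := by
        rcases mul_eq_zero.mp e1 with h | h
        · exact h
        · exact absurd h hk
      have e0 : x 0 * β + x 1 * k = 0 := by
        have := hx (T 0); rw [key] at this
        simpa [T, Pi.single_apply] using this
      have hx1 : x 1 = 0 := by
        rw [hx0, zero_mul, zero_add] at e0
        rcases mul_eq_zero.mp e0 with h | h
        · exact h
        · exact absurd h hk
      have e3 : x 2 * k = 0 := by
        have := hx (T 3); rw [key] at this
        simpa [T, Pi.single_apply] using this
      have hx2 : x 2 = 0 := by
        rcases mul_eq_zero.mp e3 with h | h
        · exact h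
        · exact absurd h hk
      have e2 : x 3 * k = 0 := by
        have := hx (T 2); rw [key] at this
        simpa [T, Pi.single_apply] using this
      have hx3 : x 3 = 0 := by
        rcases mul_eq_zero.mp e2 with h | h
        · exact h
        · exact absurd h hk
      funext j
      fin_cases j
      · exact hx0
      · exact hx1
      · exact hx2
      · exact hx3
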